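/- For any lists p and y* over a type α with decidable equality, the empty completion of p is optimal if and only if D(p, y*) = m(p, y*); i.e., D(p, y*) = sInf { D(p ++ s, y*) : s ∈ List α } if and only if D(p, y*) = min over 0 ≤ j ≤ |y*| of D(p, y*_{<j}). -/

import Mathlib

/-!
Any alignment of `p ++ s` with `y*` restricts to an alignment of `p` with some prefix of `y*`,
so `D(p ++ s, y*) ≥ m(p, y*)`; formally, `m` obeys the same three one-step bounds as `D`
(delete, insert, substitute), and the DP recurrence for `D(p ++ s, y*)` propagates the bound.
Conversely, if `y*_{<j}` attains `m(p, y*)`, appending the rest of `y*` to both sides costs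
nothing. So `m(p, y*)` is the least completion cost, and the theorem is this identity.
-/

/-- The cost structure of Mathlib's former `Levenshtein.Cost` (removed from Mathlib). -/
structure Levenshtein.Cost (α β δ : Type*) where
  delete : α → δ
  insert : β → δ
  substitute : α → β → δ

/-- Mathlib's former `Levenshtein.defaultCost`: unit costs, free matching substitution. -/
def Levenshtein.defaultCost {α : Type*} [DecidableEq α] : Levenshtein.Cost α α ℕ where
  delete _ := 1
  insert _ := 1
  substitute a b := if a = b then 0 else 1

/-- Mathlib's former `levenshtein`, via its characterizing recurrence
(`levenshtein_nil_nil`, `levenshtein_nil_cons`, `levenshtein_cons_nil`, `levenshtein_cons_cons`). -/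
def levenshtein {α β δ : Type*} [AddZeroClass δ] [Min δ] (C : Levenshtein.Cost α β δ) :
    List α → List β → δ
  | [], [] => 0
  | [], y :: ys => C.insert y + levenshtein C [] ys
  | x :: xs, [] => C.delete x + levenshtein C xs []
  | x :: xs, y :: ys =>
    min (C.delete x + levenshtein C xs (y :: ys))
      (min (C.insert y + levenshtein C (x :: xs) ys) (C.substitute x y + levenshtein C xs ys))

/-- Unit-cost Levenshtein edit distance between two lists. -/
def editDist {α : Type*} [DecidableEq α] (u v : List α) : ℕ :=
  levenshtein Levenshtein.defaultCost u v

/-- `rowMin p y = min over 0 ≤ j ≤ |y|` of the edit distance between `p` and `y.take j`. -/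
def rowMin {α : Type*} [DecidableEq α] (p y : List α) : ℕ :=
  (Finset.range (y.length + 1)).inf' (by simp) (fun j => editDist p (y.take j))

section

variable {α : Type*} [DecidableEq α]

@[simp] theorem editDist_nil_nil : editDist ([] : List α) [] = 0 := by
  simp only [editDist, levenshtein]

@[simp] theorem editDist_nil_cons (y : α) (v : List α) :
    editDist [] (y :: v) = editDist [] v + 1 := by
  simp only [editDist, levenshtein, Levenshtein.defaultCost, add_comm]

@[simp] theorem editDist_cons_nil (x : α) (u : List α) :
    editDist (x :: u) [] = editDist u [] + 1 := by
  simp only [editDist, levenshtein, Levenshtein.defaultCost, add_comm]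

theorem editDist_cons_cons (x y : α) (u v : List α) :
    editDist (x :: u) (y :: v) =
      min (editDist u (y :: v) + 1)
        (min (editDist (x :: u) v + 1) (editDist u v + if x = y then 0 else 1)) := by
  simp only [editDist, levenshtein, Levenshtein.defaultCost, add_comm]

theorem editDist_cons_left_le (x : α) (u v : List α) :
    editDist (x :: u) v ≤ editDist u v + 1 := by
  cases v with
  | nil => rw [editDist_cons_nil]
  | cons y v => rw [editDist_cons_cons]; exact min_le_left _ _

theorem editDist_cons_right_le (y : α) (u v : List α) :
    editDist u (y :: v) ≤ editDist u v + 1 := by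
  cases u with
  | nil => rw [editDist_nil_cons]
  | cons x u => rw [editDist_cons_cons]; exact (min_le_right _ _).trans (min_le_left _ _)

theorem editDist_cons_cons_le (x y : α) (u v : List α) :
    editDist (x :: u) (y :: v) ≤ editDist u v + if x = y then 0 else 1 := by
  rw [editDist_cons_cons]; exact (min_le_right _ _).trans (min_le_right _ _)

@[simp] theorem editDist_self (w : List α) : editDist w w = 0 := by
  induction w with
  | nil => exact editDist_nil_nil
  | cons a w ih => simpa [ih] using editDist_cons_cons_le a a w w

theorem editDist_append_le (u v w w' : List α) :
    editDist (u ++ w) (v ++ w') ≤ editDist u v + editDist w w' := by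
  induction u generalizing v with
  | nil =>
    rw [List.nil_append]
    induction v with
    | nil => simp
    | cons y v ih =>
      calc editDist w (y :: (v ++ w')) ≤ editDist w (v ++ w') + 1 := editDist_cons_right_le ..
        _ ≤ editDist [] (y :: v) + editDist w w' := by rw [editDist_nil_cons]; omega
  | cons x u ihu =>
    induction v with
    | nil =>
      calc editDist (x :: (u ++ w)) w' ≤ editDist (u ++ w) w' + 1 := editDist_cons_left_le ..
        _ ≤ editDist (x :: u) [] + editDist w w' := by
          have := ihu []; rw [List.nil_append] at this; rw [editDist_cons_nil]; omega
    | cons y v ihv =>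
      rw [List.cons_append, List.cons_append, editDist_cons_cons x y u v, ← min_add_add_right,
        ← min_add_add_right]
      refine le_min ?_ (le_min ?_ ?_)
      · calc _ ≤ editDist (u ++ w) (y :: v ++ w') + 1 := editDist_cons_left_le ..
          _ ≤ _ := by have := ihu (y :: v); omega
      · calc _ ≤ editDist (x :: u ++ w) (v ++ w') + 1 := editDist_cons_right_le ..
          _ ≤ _ := by omega
      · calc _ ≤ editDist (u ++ w) (v ++ w') + if x = y then 0 else 1 := editDist_cons_cons_le ..
          _ ≤ _ := by have := ihu v; omega

theorem rowMin_le_of_prefix {p y y₁ : List α} (h : y₁ <+: y) : rowMin p y ≤ editDist p y₁ := by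
  have hmem : y₁.length ∈ Finset.range (y.length + 1) :=
    Finset.mem_range_succ_iff.mpr h.length_le
  rw [List.prefix_iff_eq_take.mp h]
  exact Finset.inf'_le _ hmem

theorem exists_prefix_editDist_eq_rowMin (p y : List α) :
    ∃ y₁, y₁ <+: y ∧ editDist p y₁ = rowMin p y := by
  obtain ⟨j, -, hj⟩ := Finset.exists_mem_eq_inf' (s := Finset.range (y.length + 1))
    (by simp) (fun j => editDist p (y.take j))
  exact ⟨y.take j, List.take_prefix j y, hj.symm⟩

theorem rowMin_cons_left_le (x : α) (p y : List α) : rowMin (x :: p) y ≤ rowMin p y + 1 := by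
  obtain ⟨y₁, hy₁, h⟩ := exists_prefix_editDist_eq_rowMin p y
  exact (rowMin_le_of_prefix hy₁).trans (h ▸ editDist_cons_left_le x p y₁)

theorem rowMin_cons_right_le (b : α) (p y : List α) : rowMin p (b :: y) ≤ rowMin p y + 1 := by
  obtain ⟨y₁, hy₁, h⟩ := exists_prefix_editDist_eq_rowMin p y
  exact (rowMin_le_of_prefix (List.cons_prefix_cons.mpr ⟨rfl, hy₁⟩)).trans
    (h ▸ editDist_cons_right_le b p y₁)

theorem rowMin_cons_cons_le (x b : α) (p y : List α) :
    rowMin (x :: p) (b :: y) ≤ rowMin p y + if x = b then 0 else 1 := by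
  obtain ⟨y₁, hy₁, h⟩ := exists_prefix_editDist_eq_rowMin p y
  exact (rowMin_le_of_prefix (List.cons_prefix_cons.mpr ⟨rfl, hy₁⟩)).trans
    (h ▸ editDist_cons_cons_le x b p y₁)

theorem rowMin_le_editDist_append (p s y : List α) : rowMin p y ≤ editDist (p ++ s) y := by
  induction p generalizing y with
  | nil => exact (rowMin_le_of_prefix List.nil_prefix).trans (by simp)
  | cons x p ihp =>
    induction y with
    | nil =>
      rw [List.cons_append, editDist_cons_nil]
      exact (rowMin_cons_left_le ..).trans (Nat.add_le_add_right (ihp []) 1)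
    | cons b y ihy =>
      rw [List.cons_append, editDist_cons_cons]
      refine le_min ?_ (le_min ?_ ?_)
      · exact (rowMin_cons_left_le ..).trans (Nat.add_le_add_right (ihp _) 1)
      · exact (rowMin_cons_right_le ..).trans (Nat.add_le_add_right ihy 1)
      · exact (rowMin_cons_cons_le ..).trans (Nat.add_le_add_right (ihp y) _)

theorem isLeast_rowMin_editDist_append (p y : List α) :
    IsLeast {d | ∃ s : List α, d = editDist (p ++ s) y} (rowMin p y) := by
  refine ⟨?_, fun _ ⟨s, hs⟩ => hs ▸ rowMin_le_editDist_append p s y⟩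
  obtain ⟨y₁, ⟨t, rfl⟩, h⟩ := exists_prefix_editDist_eq_rowMin p y
  refine ⟨t, le_antisymm (rowMin_le_editDist_append p t _) ?_⟩
  calc editDist (p ++ t) (y₁ ++ t) ≤ editDist p y₁ + editDist t t := editDist_append_le ..
    _ = rowMin p (y₁ ++ t) := by rw [editDist_self, add_zero, h]

end

theorem empty_completion_optimal_iff {α : Type*} [DecidableEq α]
    (p ystar : List α) :
    editDist p ystar = sInf {d | ∃ s : List α, d = editDist (p ++ s) ystar} ↔
      editDist p ystar = rowMin p ystar := by
  rw [(isLeast_rowMin_editDist_append p ystar).csInf_eq]
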